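/- arXiv:1412.8449 — 9 statements merged into one kernel-verified Lean document; each statement's English description precedes it below -/
import Mathlib

section
/- The saddle point matrix 𝒜 = [[A, Bᵀ], [−B, C]] is nonsingular (invertible). -/
/-!
Write `z = (x, y)`. The off-diagonal blocks `Bᵀ` and `-B` contribute opposite cross terms to the
quadratic form `z ⬝ᵥ 𝒜 z`, which is therefore `x ⬝ᵥ A x + y ⬝ᵥ C y`. If `𝒜 z = 0`, both
(nonnegative) terms vanish, so `x = 0` by definiteness of `A`; the first block row then reads
`Bᵀ y = 0`, and `y = 0` because the rows of `B` are linearly independent.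
-/

open Matrix

namespace Matrix

theorem linearIndependent_row_of_rank_eq_card {R m n : Type*} [Field R] [Fintype m] [Fintype n]
    {M : Matrix m n R} (h : M.rank = Fintype.card m) : LinearIndependent R M.row := by
  rw [linearIndependent_iff_card_eq_finrank_span, ← h, rank_eq_finrank_span_row]
  rfl

theorem sumElim_dotProduct_fromBlocks_transpose_neg_mulVec {R m n : Type*} [CommRing R]
    [Fintype m] [Fintype n] (A : Matrix n n R) (B : Matrix m n R) (C : Matrix m m R)
    (x : n → R) (y : m → R) :
    Sum.elim x y ⬝ᵥ (fromBlocks A Bᵀ (-B) C *ᵥ Sum.elim x y) =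
      x ⬝ᵥ (A *ᵥ x) + y ⬝ᵥ (C *ᵥ y) := by
  have cross : x ⬝ᵥ (Bᵀ *ᵥ y) = y ⬝ᵥ (B *ᵥ x) := by
    rw [dotProduct_mulVec, vecMul_transpose, dotProduct_comm]
  simp only [fromBlocks_mulVec, Sum.elim_comp_inl, Sum.elim_comp_inr, sumElim_dotProduct_sumElim,
    dotProduct_add, cross, neg_mulVec, dotProduct_neg]
  ring

theorem fromBlocks_transpose_neg_mulVec_injective {m n : Type*} [Fintype m] [Fintype n]
    {A : Matrix n n ℝ} {B : Matrix m n ℝ} {C : Matrix m m ℝ} (hA : A.PosDef) (hC : C.PosSemidef)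
    (hB : Function.Injective Bᵀ.mulVec) :
    Function.Injective (fromBlocks A Bᵀ (-B) C).mulVec := by
  refine (injective_iff_map_eq_zero (mulVecLin (fromBlocks A Bᵀ (-B) C))).mpr fun z hz ↦ ?_
  rw [mulVecLin_apply] at hz
  obtain ⟨x, y, rfl⟩ : ∃ x y, z = Sum.elim x y := ⟨_, _, (Sum.elim_comp_inl_inr z).symm⟩
  have energy := sumElim_dotProduct_fromBlocks_transpose_neg_mulVec A B C x y
  rw [hz, dotProduct_zero] at energy
  have hyC : 0 ≤ y ⬝ᵥ (C *ᵥ y) := by simpa using hC.dotProduct_mulVec_nonneg y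
  have hx : x = 0 := by
    by_contra hx
    have hxA : 0 < x ⬝ᵥ (A *ᵥ x) := by simpa using hA.dotProduct_mulVec_pos hx
    linarith
  have hy : y = 0 := by
    refine hB ?_
    simpa [fromBlocks_mulVec, hx] using congrArg (· ∘ Sum.inl) hz
  rw [hx, hy, Sum.elim_zero_zero]

end Matrix

theorem saddle_point_matrix_nonsingular_general
    (n m : ℕ)
    (A : Matrix (Fin n) (Fin n) ℝ) (B : Matrix (Fin m) (Fin n) ℝ)
    (C : Matrix (Fin m) (Fin m) ℝ)
    (hA : A.PosDef) (hC : C.PosSemidef) (hB : B.rank = m) :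
    IsUnit (Matrix.fromBlocks A Bᵀ (-B) C) := by
  have hrows : LinearIndependent ℝ B.row :=
    linearIndependent_row_of_rank_eq_card (by rw [hB, Fintype.card_fin])
  exact mulVec_injective_iff_isUnit.mp
    (fromBlocks_transpose_neg_mulVec_injective hA hC (mulVec_injective_iff.mpr hrows))

theorem saddle_point_matrix_nonsingular
    (n m : ℕ) (hn : 0 < n) (hm : 0 < m) (hmn : m ≤ n)
    (A : Matrix (Fin n) (Fin n) ℝ) (B : Matrix (Fin m) (Fin n) ℝ)
    (C : Matrix (Fin m) (Fin m) ℝ)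
    (hA : A.PosDef) (hC : C.PosSemidef) (hB : B.rank = m) :
    IsUnit (Matrix.fromBlocks A Bᵀ (-B) C) :=
  saddle_point_matrix_nonsingular_general n m A B C hA hC hB
end

section
/- Let α, β > 0. If λ ∈ ℂ is an eigenvalue of the iteration matrix Γ_{α,β} = M_{α,β}⁻¹ N_{α,β} (regarded as a complex matrix), then λ ≠ 1 and λ ≠ −1. -/
/-!
Since `M - N` is the saddle point matrix and `M + N = diag(α I, β I)`, an eigenpair
`N v = λ M v` with `λ = 1` gives `(M - N) v = 0`, and with `λ = -1` gives `(M + N) v = 0`.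
Both `M - N` and `2 M` have the shape `[[P, Bᵀ], [-B, Q]]` with `P` positive definite, `Q`
positive semidefinite and `Bᵀ` injective. The quadratic form of such a matrix is
`xᵀ P x + yᵀ Q y`, so a kernel vector has `x = 0`, and then `Bᵀ y = 0` forces `y = 0`.
A complex eigenvector of a real matrix for a real eigenvalue has a nonzero real or imaginary
part, which is a real eigenvector.
-/

open Matrix

namespace Matrix

variable {ι κ : Type*}

theorem ker_mulVecLin_eq_bot_of_rank_eq_card [Fintype κ] {K : Type*} [Field K] (P : Matrix ι κ K)
    (hP : P.rank = Fintype.card κ) : LinearMap.ker P.mulVecLin = ⊥ := by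
  have h := LinearMap.finrank_range_add_finrank_ker P.mulVecLin
  rw [← rank, hP, Module.finrank_fintype_fun_eq_card, Nat.add_eq_left] at h
  exact Submodule.finrank_eq_zero.mp h

theorem dotProduct_fromBlocks_neg_transpose_mulVec [Fintype ι] [Fintype κ] {R : Type*}
    [CommRing R] (P : Matrix ι ι R) (B : Matrix κ ι R) (Q : Matrix κ κ R) (x : ι → R)
    (y : κ → R) :
    Sum.elim x y ⬝ᵥ (fromBlocks P Bᵀ (-B) Q *ᵥ Sum.elim x y)
      = x ⬝ᵥ (P *ᵥ x) + y ⬝ᵥ (Q *ᵥ y) := by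
  rw [fromBlocks_mulVec, Sum.elim_comp_inl, Sum.elim_comp_inr, sumElim_dotProduct_sumElim,
    dotProduct_add, dotProduct_add, neg_mulVec, dotProduct_neg, dotProduct_mulVec x Bᵀ,
    vecMul_transpose, dotProduct_comm (B *ᵥ x)]
  abel

theorem eq_zero_of_fromBlocks_neg_transpose_mulVec_eq_zero [Fintype ι] [Fintype κ]
    {P : Matrix ι ι ℝ} {B : Matrix κ ι ℝ} {Q : Matrix κ κ ℝ} (hP : P.PosDef)
    (hQ : Q.PosSemidef) (hB : LinearMap.ker Bᵀ.mulVecLin = ⊥) {v : ι ⊕ κ → ℝ}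
    (hv : fromBlocks P Bᵀ (-B) Q *ᵥ v = 0) : v = 0 := by
  rw [← Sum.elim_comp_inl_inr v] at hv ⊢
  set x := v ∘ Sum.inl
  set y := v ∘ Sum.inr
  have hquad : x ⬝ᵥ (P *ᵥ x) + y ⬝ᵥ (Q *ᵥ y) = 0 := by
    rw [← dotProduct_fromBlocks_neg_transpose_mulVec, hv, dotProduct_zero]
  have hx : x = 0 := by
    by_contra hx
    have := hP.dotProduct_mulVec_pos hx
    have := hQ.dotProduct_mulVec_nonneg y
    simp only [star_trivial] at *
    linarith
  have hy : Bᵀ *ᵥ y = 0 := by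
    simpa [hx, fromBlocks_mulVec] using congrArg (· ∘ Sum.inl) hv
  have hy : y = 0 := by
    rw [← Submodule.mem_bot ℝ, ← hB]
    exact hy
  rw [hx, hy, Sum.elim_zero_zero]

theorem eq_zero_of_diagonal_mulVec_eq_zero [Fintype ι] [DecidableEq ι] {R : Type*}
    [Semiring R] [NoZeroDivisors R] {d v : ι → R} (hd : ∀ i, d i ≠ 0)
    (hv : diagonal d *ᵥ v = 0) : v = 0 :=
  funext fun i => (mul_eq_zero.mp (by rw [← mulVec_diagonal, hv, Pi.zero_apply])).resolve_left
    (hd i)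

theorem re_comp_map_ofReal_mulVec [Fintype κ] (P : Matrix ι κ ℝ) (u : κ → ℂ) :
    Complex.re ∘ (P.map Complex.ofReal *ᵥ u) = P *ᵥ (Complex.re ∘ u) := by
  ext i
  simp [mulVec, dotProduct, Complex.re_sum]

theorem im_comp_map_ofReal_mulVec [Fintype κ] (P : Matrix ι κ ℝ) (u : κ → ℂ) :
    Complex.im ∘ (P.map Complex.ofReal *ᵥ u) = P *ᵥ (Complex.im ∘ u) := by
  ext i
  simp [mulVec, dotProduct, Complex.im_sum]

theorem exists_ne_zero_mulVec_eq_smul_of_map_ofReal [Fintype κ] {P : Matrix κ κ ℝ} {r : ℝ}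
    {u : κ → ℂ} (hu : u ≠ 0) (h : P.map Complex.ofReal *ᵥ u = (r : ℂ) • u) :
    ∃ v ≠ 0, P *ᵥ v = r • v := by
  by_cases hre : Complex.re ∘ u = 0
  · refine ⟨Complex.im ∘ u, fun him => hu (funext fun i => Complex.ext ?_ ?_), ?_⟩
    · exact congrFun hre i
    · exact congrFun him i
    · rw [← im_comp_map_ofReal_mulVec, h]
      ext i
      simp
  · refine ⟨Complex.re ∘ u, hre, ?_⟩
    rw [← re_comp_map_ofReal_mulVec, h]
    ext i
    simp

end Matrix

theorem eigenvalue_of_iteration_matrix_ne_one_neg_one_general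
    (n m : ℕ)
    (A : Matrix (Fin n) (Fin n) ℝ) (B : Matrix (Fin m) (Fin n) ℝ)
    (C : Matrix (Fin m) (Fin m) ℝ)
    (hA : A.PosDef) (hC : C.PosSemidef) (hB : B.rank = m)
    (α β : ℝ) (hα : 0 < α) (hβ : 0 < β)
    (M N : Matrix (Fin n ⊕ Fin m) (Fin n ⊕ Fin m) ℝ)
    (hM : M = (1/2 : ℝ) • Matrix.fromBlocks
      (α • (1 : Matrix (Fin n) (Fin n) ℝ) + A) Bᵀ (-B)
      (β • (1 : Matrix (Fin m) (Fin m) ℝ) + C))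
    (hN : N = (1/2 : ℝ) • Matrix.fromBlocks
      (α • (1 : Matrix (Fin n) (Fin n) ℝ) - A) (-Bᵀ) B
      (β • (1 : Matrix (Fin m) (Fin m) ℝ) - C))
    (lam : ℂ) (u : Fin n ⊕ Fin m → ℂ) (hu : u ≠ 0)
    (heig : ((M⁻¹ * N).map Complex.ofReal) *ᵥ u = lam • u) :
    lam ≠ 1 ∧ lam ≠ -1 := by
  have hBt : LinearMap.ker Bᵀ.mulVecLin = ⊥ :=
    ker_mulVecLin_eq_bot_of_rank_eq_card _ (by simpa [rank_transpose] using hB)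
  have hMdet : IsUnit M.det := by
    refine isUnit_iff_ne_zero.mpr fun h => ?_
    obtain ⟨v, hv, hMv⟩ := exists_mulVec_eq_zero_iff.mpr h
    have hP : (α • (1 : Matrix (Fin n) (Fin n) ℝ) + A).PosDef :=
      (PosDef.one.smul hα).add_posSemidef hA.posSemidef
    have hQ : (β • (1 : Matrix (Fin m) (Fin m) ℝ) + C).PosSemidef :=
      (PosSemidef.one.smul hβ.le).add hC
    refine hv (eq_zero_of_fromBlocks_neg_transpose_mulVec_eq_zero hP hQ hBt ?_)
    simpa [hM, smul_mulVec] using hMv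
  have hsub : M - N = fromBlocks A Bᵀ (-B) C := by
    rw [hM, hN, ← smul_sub, sub_eq_add_neg, fromBlocks_neg, fromBlocks_add, fromBlocks_smul]
    congr 1 <;> module
  have hadd : M + N = diagonal (Sum.elim (fun _ => α) fun _ => β) := by
    rw [hM, hN, ← smul_add, fromBlocks_add, fromBlocks_smul, ← fromBlocks_diagonal,
      ← smul_one_eq_diagonal, ← smul_one_eq_diagonal]
    congr 1 <;> module
  have heig_real : ∀ r : ℝ, lam = r → ∃ v ≠ 0, N *ᵥ v = r • (M *ᵥ v) := fun r hr => by
    obtain ⟨v, hv, hΓv⟩ := exists_ne_zero_mulVec_eq_smul_of_map_ofReal hu (hr ▸ heig)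
    refine ⟨v, hv, ?_⟩
    rw [← mul_nonsing_inv_cancel_left M N hMdet, ← mulVec_mulVec, hΓv, mulVec_smul]
  constructor
  · rintro rfl
    obtain ⟨v, hv, hNv⟩ := heig_real 1 Complex.ofReal_one.symm
    refine hv (eq_zero_of_fromBlocks_neg_transpose_mulVec_eq_zero hA hC hBt ?_)
    rw [← hsub, sub_mulVec, hNv, one_smul, sub_self]
  · rintro rfl
    obtain ⟨v, hv, hNv⟩ := heig_real (-1) (by push_cast; rfl)
    have hsum : diagonal (Sum.elim (fun _ => α) fun _ => β) *ᵥ v = 0 := by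
      rw [← hadd, add_mulVec, hNv, neg_one_smul, add_neg_cancel]
    exact hv (eq_zero_of_diagonal_mulVec_eq_zero (Sum.rec (fun _ => hα.ne') fun _ => hβ.ne') hsum)

theorem eigenvalue_of_iteration_matrix_ne_one_neg_one
    (n m : ℕ) (hn : 0 < n) (hm : 0 < m) (hmn : m ≤ n)
    (A : Matrix (Fin n) (Fin n) ℝ) (B : Matrix (Fin m) (Fin n) ℝ)
    (C : Matrix (Fin m) (Fin m) ℝ)
    (hA : A.PosDef) (hC : C.PosSemidef) (hB : B.rank = m)
    (α β : ℝ) (hα : 0 < α) (hβ : 0 < β)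
    (M N : Matrix (Fin n ⊕ Fin m) (Fin n ⊕ Fin m) ℝ)
    (hM : M = (1/2 : ℝ) • Matrix.fromBlocks
      (α • (1 : Matrix (Fin n) (Fin n) ℝ) + A) Bᵀ (-B)
      (β • (1 : Matrix (Fin m) (Fin m) ℝ) + C))
    (hN : N = (1/2 : ℝ) • Matrix.fromBlocks
      (α • (1 : Matrix (Fin n) (Fin n) ℝ) - A) (-Bᵀ) B
      (β • (1 : Matrix (Fin m) (Fin m) ℝ) - C))
    (lam : ℂ) (u : Fin n ⊕ Fin m → ℂ) (hu : u ≠ 0)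
    (heig : ((M⁻¹ * N).map Complex.ofReal) *ᵥ u = lam • u) :
    lam ≠ 1 ∧ lam ≠ -1 :=
  eigenvalue_of_iteration_matrix_ne_one_neg_one_general n m A B C hA hC hB α β hα hβ M N hM hN lam u
    hu heig
end

section
/- Let α, β > 0 and let λ ∈ ℂ be an eigenvalue of Γ_{α,β} = M_{α,β}⁻¹ N_{α,β} with eigenvector (x; y) ∈ ℂ^n × ℂ^m, (x; y) ≠ 0, i.e., N_{α,β}(x; y) = λ · M_{α,β}(x; y). Then x ≠ 0. -/
open Matrix

lemma transpose_mulVec_real_injective {m n : ℕ} (B : Matrix (Fin m) (Fin n) ℝ)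
    (hB : B.rank = m) (a : Fin m → ℝ) (h : Bᵀ *ᵥ a = 0) : a = 0 := by
  have hrank : Bᵀ.rank = m := by rw [Matrix.rank_transpose]; exact hB
  have h2 := LinearMap.finrank_range_add_finrank_ker (Bᵀ.mulVecLin)
  rw [Module.finrank_pi] at h2
  have hker : Module.finrank ℝ (LinearMap.ker Bᵀ.mulVecLin) = 0 := by
    unfold Matrix.rank at hrank
    simp at h2
    omega
  have hbot : LinearMap.ker Bᵀ.mulVecLin = ⊥ := Submodule.finrank_eq_zero.mp hker
  have hinj : Function.Injective Bᵀ.mulVecLin := LinearMap.ker_eq_bot.mp hbot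
  have : Bᵀ.mulVecLin a = Bᵀ.mulVecLin 0 := by rw [Matrix.mulVecLin_apply, Matrix.mulVecLin_apply, h, Matrix.mulVec_zero]
  exact hinj this

lemma transpose_mulVec_complex_injective {m n : ℕ} (B : Matrix (Fin m) (Fin n) ℝ)
    (hB : B.rank = m) (y : Fin m → ℂ) (h : (Bᵀ.map Complex.ofReal) *ᵥ y = 0) : y = 0 := by
  have hre : Bᵀ *ᵥ (fun j => (y j).re) = 0 := by
    ext i
    have := congrFun h i
    simp only [Matrix.mulVec, dotProduct, Matrix.map_apply, Pi.zero_apply] at this ⊢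
    have := congrArg Complex.re this
    simpa [Complex.re_sum, Complex.mul_re] using this
  have him : Bᵀ *ᵥ (fun j => (y j).im) = 0 := by
    ext i
    have := congrFun h i
    simp only [Matrix.mulVec, dotProduct, Matrix.map_apply, Pi.zero_apply] at this ⊢
    have := congrArg Complex.im this
    simpa [Complex.im_sum, Complex.mul_im] using this
  have h1 := transpose_mulVec_real_injective B hB _ hre
  have h2 := transpose_mulVec_real_injective B hB _ him
  funext j
  have e1 := congrFun h1 j
  have e2 := congrFun h2 j
  simp only [Pi.zero_apply] at e1 e2 ⊢
  exact Complex.ext e1 e2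

theorem eigenvector_first_component_ne_zero
    (n m : ℕ) (hn : 0 < n) (hm : 0 < m) (hmn : m ≤ n)
    (A : Matrix (Fin n) (Fin n) ℝ) (B : Matrix (Fin m) (Fin n) ℝ)
    (C : Matrix (Fin m) (Fin m) ℝ)
    (hA : A.PosDef) (hC : C.PosSemidef) (hB : B.rank = m)
    (α β : ℝ) (hα : 0 < α) (hβ : 0 < β)
    (M N : Matrix (Fin n ⊕ Fin m) (Fin n ⊕ Fin m) ℝ)
    (hM : M = (1/2 : ℝ) • Matrix.fromBlocks
      (α • (1 : Matrix (Fin n) (Fin n) ℝ) + A) Bᵀ (-B)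
      (β • (1 : Matrix (Fin m) (Fin m) ℝ) + C))
    (hN : N = (1/2 : ℝ) • Matrix.fromBlocks
      (α • (1 : Matrix (Fin n) (Fin n) ℝ) - A) (-Bᵀ) B
      (β • (1 : Matrix (Fin m) (Fin m) ℝ) - C))
    (lam : ℂ) (x : Fin n → ℂ) (y : Fin m → ℂ)
    (huv : Sum.elim x y ≠ 0)
    (heig : (N.map Complex.ofReal) *ᵥ Sum.elim x y
      = lam • ((M.map Complex.ofReal) *ᵥ Sum.elim x y)) :
    x ≠ 0 := by
  intro hx
  subst hx hM hN
  have hy : y ≠ 0 := by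
    intro h
    apply huv
    subst h
    funext i
    cases i <;> simp
  -- rewrite the smul out
  have hmap : ∀ (X : Matrix (Fin n ⊕ Fin m) (Fin n ⊕ Fin m) ℝ),
      ((1/2 : ℝ) • X).map Complex.ofReal = (1/2 : ℝ) • X.map Complex.ofReal := by
    intro X
    ext i j
    simp
  rw [hmap, hmap, Matrix.smul_mulVec, Matrix.smul_mulVec] at heig
  rw [smul_comm lam ((1/2:ℝ))] at heig
  have heig2 := smul_right_injective (Fin n ⊕ Fin m → ℂ) (by norm_num : (1/2:ℝ) ≠ 0) heig
  rw [Matrix.fromBlocks_map, Matrix.fromBlocks_map, Matrix.fromBlocks_mulVec,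
    Matrix.fromBlocks_mulVec] at heig2
  simp only [Sum.elim_comp_inl, Sum.elim_comp_inr, Matrix.mulVec_zero, zero_add] at heig2
  have htop : (-Bᵀ).map Complex.ofReal *ᵥ y = lam • (Bᵀ.map Complex.ofReal *ᵥ y) := by
    funext i
    have := congrFun heig2 (Sum.inl i)
    simpa using this
  have hbot : (β • 1 - C).map Complex.ofReal *ᵥ y = lam • ((β • 1 + C).map Complex.ofReal *ᵥ y) := by
    funext j
    have := congrFun heig2 (Sum.inr j)
    simpa using this
  by_cases hlam : lam = -1
  · -- bottom eq forces y = 0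
    subst hlam
    apply hy
    have hsum : ((β • 1 - C).map Complex.ofReal + (β • 1 + C).map Complex.ofReal) *ᵥ y = 0 := by
      rw [Matrix.add_mulVec, hbot]
      simp
    have hmat : ((β • (1 : Matrix (Fin m) (Fin m) ℝ) - C).map Complex.ofReal
        + (β • (1 : Matrix (Fin m) (Fin m) ℝ) + C).map Complex.ofReal)
        = ((2 * β : ℝ) • (1 : Matrix (Fin m) (Fin m) ℝ)).map Complex.ofReal := by
      ext i j
      simp only [Matrix.add_apply, Matrix.map_apply, Matrix.sub_apply, Matrix.smul_apply,
        Matrix.one_apply, smul_eq_mul]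
      split_ifs <;> push_cast <;> ring
    rw [hmat] at hsum
    have : ((2 * β : ℝ) • (1 : Matrix (Fin m) (Fin m) ℝ)).map Complex.ofReal
        = ((2 * β : ℂ)) • (1 : Matrix (Fin m) (Fin m) ℂ) := by
      ext i j
      simp only [Matrix.map_apply, Matrix.smul_apply, Matrix.one_apply, smul_eq_mul]
      split_ifs <;> push_cast <;> ring
    rw [this, Matrix.smul_mulVec, Matrix.one_mulVec] at hsum
    have h2β : (2 * β : ℂ) ≠ 0 := by
      simp only [ne_eq, mul_eq_zero, Complex.ofReal_eq_zero]
      push_neg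
      constructor <;> [norm_num; exact ne_of_gt hβ]
    funext j
    have := congrFun hsum j
    simp only [Pi.smul_apply, Pi.zero_apply, smul_eq_mul] at this ⊢
    exact (mul_eq_zero.mp this).resolve_left h2β
  · -- top eq forces Bᵀ y = 0, hence y = 0
    apply hy
    apply transpose_mulVec_complex_injective B hB
    have hmapneg : (-Bᵀ).map Complex.ofReal = -(Bᵀ.map Complex.ofReal) := by
      ext i j
      simp
    have hneg : -(Bᵀ.map Complex.ofReal *ᵥ y) = lam • (Bᵀ.map Complex.ofReal *ᵥ y) := by
      rw [← htop, hmapneg, Matrix.neg_mulVec]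
    have hcomb : (1 + lam) • (Bᵀ.map Complex.ofReal *ᵥ y) = 0 := by
      rw [add_smul, one_smul, ← hneg]
      simp
    have h1l : (1 + lam) ≠ 0 := by
      intro h
      exact hlam (by linear_combination h)
    exact (smul_eq_zero.mp hcomb).resolve_left h1l
end

section
/- Let α, β > 0 and let λ ∈ ℂ be an eigenvalue of Γ_{α,β} = M_{α,β}⁻¹ N_{α,β} with eigenvector (x; y) ∈ ℂ^n × ℂ^m, (x; y) ≠ 0, such that Bx = 0. Then λ = (α‖x‖² − x*Ax)/(α‖x‖² + x*Ax); in particular λ is real and |λ| < 1, where x*Ax denotes the (real, positive) value of the Hermitian form of A at x and ‖x‖ is the Euclidean norm of x. -/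
/-!
Testing the first block row of the eigenvalue equation against `x` kills the coupling term,
since `xᴴ Bᵀ y = (B x)ᴴ y = 0`; this leaves `α‖x‖² - xᴴAx = λ (α‖x‖² + xᴴAx)` with both
`α‖x‖²` and `xᴴAx` positive reals, provided `x ≠ 0`. If `x = 0`, the first block row reads
`-Bᵀy = λ Bᵀy`, and `Bᵀ` is injective, so `λ = -1`; the second block row then gives `2βy = 0`,
contradicting `(x; y) ≠ 0`.
-/

open Matrix ComplexOrder

lemma Sum.smul_elim {R α β γ : Type*} [SMul R γ] (c : R) (f : α → γ) (g : β → γ) :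
    c • Sum.elim f g = Sum.elim (c • f) (c • g) := by
  ext (i | i) <;> rfl

lemma Complex.fun_eq_zero_iff {ι : Type*} {z : ι → ℂ} :
    z = 0 ↔ Complex.re ∘ z = 0 ∧ Complex.im ∘ z = 0 :=
  ⟨by rintro rfl; exact ⟨by ext; simp, by ext; simp⟩,
    fun h => funext fun i => Complex.ext (congrFun h.1 i) (congrFun h.2 i)⟩

lemma Complex.sub_div_add_im_eq_zero_and_norm_lt_one {a b : ℂ} (ha : 0 < a) (hb : 0 < b) :
    ((a - b) / (a + b)).im = 0 ∧ ‖(a - b) / (a + b)‖ < 1 := by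
  obtain ⟨r, hr, rfl⟩ : ∃ r : ℝ, 0 < r ∧ (r : ℂ) = a :=
    ⟨a.re, (pos_iff.mp ha).1, ext rfl (pos_iff.mp ha).2⟩
  obtain ⟨s, hs, rfl⟩ : ∃ s : ℝ, 0 < s ∧ (s : ℂ) = b :=
    ⟨b.re, (pos_iff.mp hb).1, ext rfl (pos_iff.mp hb).2⟩
  rw [← ofReal_sub, ← ofReal_add, ← ofReal_div, ofReal_im, norm_real, Real.norm_eq_abs,
    abs_div, abs_of_pos (add_pos hr hs), div_lt_one (add_pos hr hs), abs_sub_lt_iff]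
  exact ⟨rfl, by linarith, by linarith⟩

namespace Matrix

variable {m n : Type*}

lemma conjTranspose_map_ofReal (K : Matrix m n ℝ) :
    (K.map Complex.ofReal)ᴴ = Kᵀ.map Complex.ofReal := by
  ext i j
  simp

variable [Fintype n]

lemma re_map_ofReal_mulVec (K : Matrix m n ℝ) (z : n → ℂ) :
    Complex.re ∘ (K.map Complex.ofReal *ᵥ z) = K *ᵥ (Complex.re ∘ z) := by
  ext i
  simp [mulVec, dotProduct, Complex.re_sum]

lemma im_map_ofReal_mulVec (K : Matrix m n ℝ) (z : n → ℂ) :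
    Complex.im ∘ (K.map Complex.ofReal *ᵥ z) = K *ᵥ (Complex.im ∘ z) := by
  ext i
  simp [mulVec, dotProduct, Complex.im_sum]

lemma re_star_dotProduct (z w : n → ℂ) :
    (star z ⬝ᵥ w).re =
      (Complex.re ∘ z) ⬝ᵥ (Complex.re ∘ w) + (Complex.im ∘ z) ⬝ᵥ (Complex.im ∘ w) := by
  simp [dotProduct, Complex.re_sum, Finset.sum_add_distrib]

lemma im_star_dotProduct (z w : n → ℂ) :
    (star z ⬝ᵥ w).im =
      (Complex.re ∘ z) ⬝ᵥ (Complex.im ∘ w) - (Complex.im ∘ z) ⬝ᵥ (Complex.re ∘ w) := by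
  simp [dotProduct, Complex.im_sum, sub_eq_add_neg, Finset.sum_add_distrib]

lemma mulVec_map_ofReal_injective {K : Matrix m n ℝ} (hK : Function.Injective K.mulVec) :
    Function.Injective (K.map Complex.ofReal).mulVec := by
  refine (injective_iff_map_eq_zero (K.map Complex.ofReal).mulVecLin).mpr fun z hz => ?_
  rw [mulVecLin_apply] at hz
  refine Complex.fun_eq_zero_iff.mpr ⟨hK ?_, hK ?_⟩
  · rw [← re_map_ofReal_mulVec, hz, mulVec_zero]; rfl
  · rw [← im_map_ofReal_mulVec, hz, mulVec_zero]; rfl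

lemma PosDef.map_ofReal {A : Matrix n n ℝ} (hA : A.PosDef) : (A.map Complex.ofReal).PosDef := by
  have hAt : Aᵀ = A := by simpa using hA.isHermitian.eq
  have hnonneg (v : n → ℝ) : 0 ≤ v ⬝ᵥ (A *ᵥ v) := by
    simpa using hA.posSemidef.dotProduct_mulVec_nonneg v
  have hpos {v : n → ℝ} (hv : v ≠ 0) : 0 < v ⬝ᵥ (A *ᵥ v) := by
    simpa using hA.dotProduct_mulVec_pos hv
  refine .of_dotProduct_mulVec_pos ?_ fun z hz => Complex.pos_iff.mpr ⟨?_, ?_⟩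
  · ext i j
    simpa using (congrFun (congrFun hAt j) i).symm
  · rw [re_star_dotProduct, re_map_ofReal_mulVec, im_map_ofReal_mulVec]
    by_cases hre : Complex.re ∘ z = 0
    · have him : Complex.im ∘ z ≠ 0 := fun him => hz (Complex.fun_eq_zero_iff.mpr ⟨hre, him⟩)
      linarith [hnonneg (Complex.re ∘ z), hpos him]
    · linarith [hpos hre, hnonneg (Complex.im ∘ z)]
  · rw [im_star_dotProduct, im_map_ofReal_mulVec, re_map_ofReal_mulVec, dotProduct_mulVec,
      ← mulVec_transpose, hAt, dotProduct_comm, sub_self]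

lemma mulVec_transpose_injective_of_rank_eq [Fintype m] {K : Type*} [Field K] {B : Matrix m n K}
    (hB : B.rank = Fintype.card m) : Function.Injective Bᵀ.mulVec := by
  have hrows : LinearIndependent K B.row := by
    rw [linearIndependent_iff_card_eq_finrank_span, Set.finrank, ← rank_eq_finrank_span_row, hB]
  rw [← vecMul_injective_iff] at hrows
  simpa only [funext (mulVec_transpose B)] using hrows

end Matrix

section Splitting

variable {n m : Type*} [Fintype n] [Fintype m] {A : Matrix n n ℂ} {B : Matrix m n ℂ}
  {C : Matrix m m ℂ} {α β : ℝ} {lam : ℂ} {x : n → ℂ} {y : m → ℂ}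

lemma splitting_eigen_rows [DecidableEq n] [DecidableEq m]
    (h : fromBlocks (α • 1 - A) (-Bᴴ) B (β • 1 - C) *ᵥ Sum.elim x y
      = lam • (fromBlocks (α • 1 + A) Bᴴ (-B) (β • 1 + C) *ᵥ Sum.elim x y)) :
    α • x - A *ᵥ x - Bᴴ *ᵥ y = lam • (α • x + A *ᵥ x + Bᴴ *ᵥ y) ∧
      B *ᵥ x + (β • y - C *ᵥ y) = lam • (-(B *ᵥ x) + (β • y + C *ᵥ y)) := by
  rw [fromBlocks_mulVec, fromBlocks_mulVec, Sum.smul_elim, Sum.elim_eq_iff] at h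
  simpa only [Sum.elim_comp_inl, Sum.elim_comp_inr, sub_mulVec, add_mulVec, neg_mulVec,
    smul_mulVec, one_mulVec, sub_eq_add_neg, add_assoc] using h

lemma splitting_eigen_fst_ne_zero (hB : Function.Injective Bᴴ.mulVec) (hβ : β ≠ 0)
    (hxy : Sum.elim x y ≠ 0)
    (h₁ : α • x - A *ᵥ x - Bᴴ *ᵥ y = lam • (α • x + A *ᵥ x + Bᴴ *ᵥ y))
    (h₂ : B *ᵥ x + (β • y - C *ᵥ y) = lam • (-(B *ᵥ x) + (β • y + C *ᵥ y))) : x ≠ 0 := by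
  rintro rfl
  have hy : y ≠ 0 := fun hy => hxy (by rw [hy, Sum.elim_zero_zero])
  simp only [mulVec_zero, smul_zero, sub_zero, zero_sub, zero_add, neg_zero] at h₁ h₂
  have hlam : lam = -1 := by
    have hBy : Bᴴ *ᵥ y ≠ 0 := fun h => hy (hB (by rw [h, mulVec_zero]))
    have : (1 + lam) • Bᴴ *ᵥ y = 0 := by rw [add_smul, one_smul, ← h₁]; abel
    linear_combination (smul_eq_zero.mp this).resolve_right hBy
  subst hlam
  have h2βy : (2 * β) • y = 0 := by
    rw [mul_smul, two_smul]
    linear_combination (norm := module) h₂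
  exact hy ((smul_eq_zero.mp h2βy).resolve_left (mul_ne_zero two_ne_zero hβ))

lemma splitting_eigen_quotient (hBx : B *ᵥ x = 0)
    (h₁ : α • x - A *ᵥ x - Bᴴ *ᵥ y = lam • (α • x + A *ᵥ x + Bᴴ *ᵥ y)) :
    α * (star x ⬝ᵥ x) - star x ⬝ᵥ (A *ᵥ x) =
      lam * (α * (star x ⬝ᵥ x) + star x ⬝ᵥ (A *ᵥ x)) := by
  have hBy : star x ⬝ᵥ (Bᴴ *ᵥ y) = 0 := by
    rw [dotProduct_mulVec, ← star_mulVec, hBx, star_zero, zero_dotProduct]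
  simpa only [dotProduct_sub, dotProduct_add, dotProduct_smul, hBy, Complex.real_smul,
    smul_eq_mul, sub_zero, add_zero] using congrArg (star x ⬝ᵥ ·) h₁

end Splitting

theorem eigenvalue_real_abs_lt_one_of_Bx_eq_zero_general
    (n m : ℕ)
    (A : Matrix (Fin n) (Fin n) ℝ) (B : Matrix (Fin m) (Fin n) ℝ)
    (C : Matrix (Fin m) (Fin m) ℝ)
    (hA : A.PosDef) (hB : B.rank = m)
    (α β : ℝ) (hα : 0 < α) (hβ : 0 < β)
    (M N : Matrix (Fin n ⊕ Fin m) (Fin n ⊕ Fin m) ℝ)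
    (hM : M = (1/2 : ℝ) • Matrix.fromBlocks
      (α • (1 : Matrix (Fin n) (Fin n) ℝ) + A) Bᵀ (-B)
      (β • (1 : Matrix (Fin m) (Fin m) ℝ) + C))
    (hN : N = (1/2 : ℝ) • Matrix.fromBlocks
      (α • (1 : Matrix (Fin n) (Fin n) ℝ) - A) (-Bᵀ) B
      (β • (1 : Matrix (Fin m) (Fin m) ℝ) - C))
    (lam : ℂ) (x : Fin n → ℂ) (y : Fin m → ℂ)
    (huv : Sum.elim x y ≠ 0)
    (heig : (N.map Complex.ofReal) *ᵥ Sum.elim x y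
      = lam • ((M.map Complex.ofReal) *ᵥ Sum.elim x y))
    (hBx : (B.map Complex.ofReal) *ᵥ x = 0) :
    lam = ((α : ℂ) * (star x ⬝ᵥ x) - star x ⬝ᵥ ((A.map Complex.ofReal) *ᵥ x)) /
          ((α : ℂ) * (star x ⬝ᵥ x) + star x ⬝ᵥ ((A.map Complex.ofReal) *ᵥ x)) ∧
    lam.im = 0 ∧ ‖lam‖ < 1 := by
  have hMc : M.map Complex.ofReal = (1/2 : ℝ) • fromBlocks (α • 1 + A.map Complex.ofReal)
      (B.map Complex.ofReal)ᴴ (-B.map Complex.ofReal) (β • 1 + C.map Complex.ofReal) := by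
    simp [hM, fromBlocks_map, Matrix.map_add, Matrix.map_smul, Matrix.map_neg,
      conjTranspose_map_ofReal]
  have hNc : N.map Complex.ofReal = (1/2 : ℝ) • fromBlocks (α • 1 - A.map Complex.ofReal)
      (-(B.map Complex.ofReal)ᴴ) (B.map Complex.ofReal) (β • 1 - C.map Complex.ofReal) := by
    simp [hN, fromBlocks_map, Matrix.map_sub, Matrix.map_smul, Matrix.map_neg,
      conjTranspose_map_ofReal]
  rw [hMc, hNc, smul_mulVec, smul_mulVec, smul_comm lam] at heig
  obtain ⟨h₁, h₂⟩ := splitting_eigen_rows (smul_right_injective _ (by norm_num) heig)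
  have hBinj := mulVec_map_ofReal_injective
    (mulVec_transpose_injective_of_rank_eq (hB.trans (Fintype.card_fin m).symm))
  rw [← conjTranspose_map_ofReal] at hBinj
  have hx := splitting_eigen_fst_ne_zero hBinj hβ.ne' huv h₁ h₂
  have hαx : 0 < (α : ℂ) * (star x ⬝ᵥ x) :=
    mul_pos (by exact_mod_cast hα) (dotProduct_star_self_pos_iff.mpr hx)
  have hAx := hA.map_ofReal.dotProduct_mulVec_pos hx
  have hlam := eq_div_of_mul_eq (add_pos hαx hAx).ne' (splitting_eigen_quotient hBx h₁).symm
  exact ⟨hlam, hlam ▸ Complex.sub_div_add_im_eq_zero_and_norm_lt_one hαx hAx⟩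

theorem eigenvalue_real_abs_lt_one_of_Bx_eq_zero
    (n m : ℕ) (hn : 0 < n) (hm : 0 < m) (hmn : m ≤ n)
    (A : Matrix (Fin n) (Fin n) ℝ) (B : Matrix (Fin m) (Fin n) ℝ)
    (C : Matrix (Fin m) (Fin m) ℝ)
    (hA : A.PosDef) (hC : C.PosSemidef) (hB : B.rank = m)
    (α β : ℝ) (hα : 0 < α) (hβ : 0 < β)
    (M N : Matrix (Fin n ⊕ Fin m) (Fin n ⊕ Fin m) ℝ)
    (hM : M = (1/2 : ℝ) • Matrix.fromBlocks
      (α • (1 : Matrix (Fin n) (Fin n) ℝ) + A) Bᵀ (-B)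
      (β • (1 : Matrix (Fin m) (Fin m) ℝ) + C))
    (hN : N = (1/2 : ℝ) • Matrix.fromBlocks
      (α • (1 : Matrix (Fin n) (Fin n) ℝ) - A) (-Bᵀ) B
      (β • (1 : Matrix (Fin m) (Fin m) ℝ) - C))
    (lam : ℂ) (x : Fin n → ℂ) (y : Fin m → ℂ)
    (huv : Sum.elim x y ≠ 0)
    (heig : (N.map Complex.ofReal) *ᵥ Sum.elim x y
      = lam • ((M.map Complex.ofReal) *ᵥ Sum.elim x y))
    (hBx : (B.map Complex.ofReal) *ᵥ x = 0) :
    lam = ((α : ℂ) * (star x ⬝ᵥ x) - star x ⬝ᵥ ((A.map Complex.ofReal) *ᵥ x)) /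
          ((α : ℂ) * (star x ⬝ᵥ x) + star x ⬝ᵥ ((A.map Complex.ofReal) *ᵥ x)) ∧
    lam.im = 0 ∧ ‖lam‖ < 1 :=
  eigenvalue_real_abs_lt_one_of_Bx_eq_zero_general n m A B C hA hB α β hα hβ M N hM hN lam x y huv
    heig hBx
end

section
/- Let α, β > 0. The inverse of the preconditioner P_MGSS = M_{α,β} is given by P_MGSS⁻¹ = 2·[[I, 0], [(βI + C)⁻¹B, I]] · [[S⁻¹, 0], [0, (βI + C)⁻¹]] · [[I, −Bᵀ(βI + C)⁻¹], [0, I]], where S = αI + A + Bᵀ(βI + C)⁻¹B. -/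
/-! The (2,2) block βI + C of the preconditioner is positive definite, and the corresponding Schur
complement of `[[αI + A, Bᵀ], [-B, βI + C]]` is S, again positive definite. The claimed formula is
the inverse of the block LDU factorization along that Schur complement, read factor by factor. -/

open Matrix

namespace Matrix

variable {l m : Type*} [Fintype l] [Fintype m] [DecidableEq l] [DecidableEq m]

section SchurComplement

variable {R : Type*} [CommRing R] {A : Matrix l l R} {B : Matrix l m R} {C : Matrix m l R}
  {D : Matrix m m R}

theorem fromBlocks_mul_inverse_factorization₂₂ (hD : IsUnit D) (hS : IsUnit (A - B * D⁻¹ * C)) :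
    fromBlocks A B C D *
      (fromBlocks 1 0 (-(D⁻¹ * C)) 1 * fromBlocks (A - B * D⁻¹ * C)⁻¹ 0 0 D⁻¹ *
        fromBlocks 1 (-(B * D⁻¹)) 0 1) = 1 := by
  let := hD.invertible
  have hL : fromBlocks (1 : Matrix l l R) 0 (D⁻¹ * C) (1 : Matrix m m R) *
      fromBlocks 1 0 (-(D⁻¹ * C)) 1 = 1 := by
    simp [fromBlocks_multiply]
  have hΛ : fromBlocks (A - B * D⁻¹ * C) 0 0 D * fromBlocks (A - B * D⁻¹ * C)⁻¹ 0 0 D⁻¹ = 1 := by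
    simp [fromBlocks_multiply, mul_nonsing_inv, (isUnit_iff_isUnit_det _).mp, hS, hD]
  have hU : fromBlocks (1 : Matrix l l R) (B * D⁻¹) 0 (1 : Matrix m m R) *
      fromBlocks 1 (-(B * D⁻¹)) 0 1 = 1 := by
    simp [fromBlocks_multiply]
  calc _ = fromBlocks 1 (B * D⁻¹) 0 1 *
        (fromBlocks (A - B * D⁻¹ * C) 0 0 D *
          (fromBlocks 1 0 (D⁻¹ * C) 1 * fromBlocks 1 0 (-(D⁻¹ * C)) 1) *
          fromBlocks (A - B * D⁻¹ * C)⁻¹ 0 0 D⁻¹) *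
        fromBlocks 1 (-(B * D⁻¹)) 0 1 := by
        rw [fromBlocks_eq_of_invertible₂₂ A B C D, invOf_eq_nonsing_inv]
        simp only [Matrix.mul_assoc]
    _ = 1 := by rw [hL, Matrix.mul_one, hΛ, Matrix.mul_one, hU]

end SchurComplement

omit [Fintype m] in
theorem PosDef.smul_one_add {c : ℝ} (hc : 0 < c) {C : Matrix m m ℝ} (hC : C.PosSemidef) :
    (c • (1 : Matrix m m ℝ) + C).PosDef :=
  (PosDef.one.smul hc).add_posSemidef hC

omit [DecidableEq l] in
theorem PosDef.add_transpose_mul_inv_mul {K : Matrix l l ℝ} {E : Matrix m m ℝ} (hK : K.PosDef)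
    (hE : E.PosDef) (B : Matrix m l ℝ) : (K + Bᵀ * E⁻¹ * B).PosDef :=
  hK.add_posSemidef <| by
    simpa [Matrix.mul_assoc] using hE.inv.posSemidef.conjTranspose_mul_mul_same B

end Matrix

theorem MGSS_inverse_factorization_general
    (n m : ℕ)
    (A : Matrix (Fin n) (Fin n) ℝ) (B : Matrix (Fin m) (Fin n) ℝ)
    (C : Matrix (Fin m) (Fin m) ℝ)
    (hA : A.PosDef) (hC : C.PosSemidef)
    (α β : ℝ) (hα : 0 < α) (hβ : 0 < β) :
    ((1/2 : ℝ) • Matrix.fromBlocks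
        (α • (1 : Matrix (Fin n) (Fin n) ℝ) + A) Bᵀ (-B)
        (β • (1 : Matrix (Fin m) (Fin m) ℝ) + C))⁻¹
    = (2 : ℝ) •
      (Matrix.fromBlocks 1 0 ((β • (1 : Matrix (Fin m) (Fin m) ℝ) + C)⁻¹ * B) 1 *
       Matrix.fromBlocks
         ((α • (1 : Matrix (Fin n) (Fin n) ℝ) + A +
           Bᵀ * (β • (1 : Matrix (Fin m) (Fin m) ℝ) + C)⁻¹ * B)⁻¹) 0 0
         ((β • (1 : Matrix (Fin m) (Fin m) ℝ) + C)⁻¹) *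
       Matrix.fromBlocks 1 (-(Bᵀ * (β • (1 : Matrix (Fin m) (Fin m) ℝ) + C)⁻¹)) 0 1) := by
  set E := β • (1 : Matrix (Fin m) (Fin m) ℝ) + C
  set K := α • (1 : Matrix (Fin n) (Fin n) ℝ) + A
  have hE : E.PosDef := PosDef.smul_one_add hβ hC
  have hS : (K + Bᵀ * E⁻¹ * B).PosDef :=
    (PosDef.smul_one_add hα hA.posSemidef).add_transpose_mul_inv_mul hE B
  have hSchur : K - Bᵀ * E⁻¹ * -B = K + Bᵀ * E⁻¹ * B := by
    rw [Matrix.mul_neg, sub_neg_eq_add]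
  have key := fromBlocks_mul_inverse_factorization₂₂ hE.isUnit (hSchur ▸ hS.isUnit)
  rw [hSchur, Matrix.mul_neg, neg_neg] at key
  apply inv_eq_right_inv
  rw [smul_mul_smul_comm, show (1 / 2 : ℝ) * 2 = 1 by norm_num, one_smul, key]

theorem MGSS_inverse_factorization
    (n m : ℕ) (hn : 0 < n) (hm : 0 < m) (hmn : m ≤ n)
    (A : Matrix (Fin n) (Fin n) ℝ) (B : Matrix (Fin m) (Fin n) ℝ)
    (C : Matrix (Fin m) (Fin m) ℝ)
    (hA : A.PosDef) (hC : C.PosSemidef)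
    (α β : ℝ) (hα : 0 < α) (hβ : 0 < β) :
    ((1/2 : ℝ) • Matrix.fromBlocks
        (α • (1 : Matrix (Fin n) (Fin n) ℝ) + A) Bᵀ (-B)
        (β • (1 : Matrix (Fin m) (Fin m) ℝ) + C))⁻¹
    = (2 : ℝ) •
      (Matrix.fromBlocks 1 0 ((β • (1 : Matrix (Fin m) (Fin m) ℝ) + C)⁻¹ * B) 1 *
       Matrix.fromBlocks
         ((α • (1 : Matrix (Fin n) (Fin n) ℝ) + A +
           Bᵀ * (β • (1 : Matrix (Fin m) (Fin m) ℝ) + C)⁻¹ * B)⁻¹) 0 0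
         ((β • (1 : Matrix (Fin m) (Fin m) ℝ) + C)⁻¹) *
       Matrix.fromBlocks 1 (-(Bᵀ * (β • (1 : Matrix (Fin m) (Fin m) ℝ) + C)⁻¹)) 0 1) :=
  MGSS_inverse_factorization_general n m A B C hA hC α β hα hβ
end

section
/- Let β > 0 and let Ψ = P_RMGSS⁻¹ 𝒜. Then Ψ is block upper triangular of the form Ψ = [[I_n, X], [0, (βI + G)⁻¹G]], where G = C + B A⁻¹ Bᵀ, S = βI + G, and X = A⁻¹Bᵀ − A⁻¹Bᵀ S⁻¹ B A⁻¹Bᵀ − A⁻¹Bᵀ S⁻¹ C; in particular, the (1,1) block of Ψ is the n×n identity, the (2,1) block is zero, and the (2,2) block equals (βI + G)⁻¹G. -/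
open Matrix

theorem RMGSS_preconditioned_matrix_block_form
    (n m : ℕ) (hn : 0 < n) (hm : 0 < m) (hmn : m ≤ n)
    (A : Matrix (Fin n) (Fin n) ℝ) (B : Matrix (Fin m) (Fin n) ℝ)
    (C : Matrix (Fin m) (Fin m) ℝ)
    (hA : A.PosDef) (hC : C.PosSemidef) (hB : B.rank = m)
    (β : ℝ) (hβ : 0 < β)
    (G S : Matrix (Fin m) (Fin m) ℝ)
    (hG : G = C + B * A⁻¹ * Bᵀ)
    (hS : S = β • (1 : Matrix (Fin m) (Fin m) ℝ) + G) :
    (Matrix.fromBlocks A Bᵀ (-B) (β • (1 : Matrix (Fin m) (Fin m) ℝ) + C))⁻¹ *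
      Matrix.fromBlocks A Bᵀ (-B) C
    = Matrix.fromBlocks 1
        (A⁻¹ * Bᵀ - A⁻¹ * Bᵀ * S⁻¹ * B * A⁻¹ * Bᵀ - A⁻¹ * Bᵀ * S⁻¹ * C)
        0
        ((β • (1 : Matrix (Fin m) (Fin m) ℝ) + G)⁻¹ * G) := by
  -- basic facts
  have hAinv : A.PosDef := hA
  have hAunit : IsUnit A.det := isUnit_iff_ne_zero.mpr hA.det_pos.ne'
  have hAinvPD : (A⁻¹).PosDef := hA.inv
  have hBABt : (B * A⁻¹ * Bᵀ).PosSemidef := by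
    have := hAinvPD.posSemidef.mul_mul_conjTranspose_same B
    simpa [Matrix.conjTranspose_eq_transpose_of_trivial] using this
  have hGpsd : G.PosSemidef := by
    rw [hG]; exact hC.add hBABt
  have hβ1 : (β • (1 : Matrix (Fin m) (Fin m) ℝ)).PosDef := by
    rw [Matrix.smul_one_eq_diagonal]
    exact Matrix.posDef_diagonal_iff.mpr fun _ => hβ
  have hSPD : S.PosDef := by
    rw [hS]; exact hβ1.add_posSemidef hGpsd
  have hSunit : IsUnit S.det := isUnit_iff_ne_zero.mpr hSPD.det_pos.ne'
  have hAA : A * A⁻¹ = 1 := Matrix.mul_nonsing_inv A hAunit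
  have hSS : S * S⁻¹ = 1 := Matrix.mul_nonsing_inv S hSunit
  -- the preconditioner
  set P := Matrix.fromBlocks A Bᵀ (-B) (β • (1 : Matrix (Fin m) (Fin m) ℝ) + C) with hP
  set X := A⁻¹ * Bᵀ - A⁻¹ * Bᵀ * S⁻¹ * B * A⁻¹ * Bᵀ - A⁻¹ * Bᵀ * S⁻¹ * C with hX
  -- P is invertible
  have hPdet : IsUnit P.det := by
    have : Invertible A := A.invertibleOfIsUnitDet hAunit
    rw [hP, Matrix.det_fromBlocks₁₁]
    rw [Matrix.invOf_eq_nonsing_inv]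
    have heq : β • (1 : Matrix (Fin m) (Fin m) ℝ) + C - -B * A⁻¹ * Bᵀ = S := by
      rw [hS, hG]
      simp [Matrix.neg_mul, sub_neg_eq_add, add_assoc]
    rw [heq]
    exact hAunit.mul hSunit
  have hSinv : (β • (1 : Matrix (Fin m) (Fin m) ℝ) + G)⁻¹ = S⁻¹ := by rw [hS]
  -- key multiplication identity
  have hAX : A * X = Bᵀ - Bᵀ * S⁻¹ * G := by
    rw [hX, hG]
    simp only [Matrix.mul_sub, Matrix.mul_add, ← Matrix.mul_assoc, hAA, Matrix.one_mul]
    noncomm_ring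
  have hBX : -B * X = -(B * A⁻¹ * Bᵀ) + B * A⁻¹ * Bᵀ * S⁻¹ * G := by
    rw [hX, hG]
    simp only [Matrix.neg_mul, Matrix.mul_sub, Matrix.mul_add, ← Matrix.mul_assoc]
    noncomm_ring
  have hDC : (β • (1 : Matrix (Fin m) (Fin m) ℝ) + C) * (S⁻¹ * G)
      = G - B * A⁻¹ * Bᵀ * S⁻¹ * G := by
    have hBC : β • (1 : Matrix (Fin m) (Fin m) ℝ) + C = S - B * A⁻¹ * Bᵀ := by
      rw [hS, hG]; noncomm_ring
    rw [hBC, Matrix.sub_mul, ← Matrix.mul_assoc, hSS, Matrix.one_mul]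
    simp [Matrix.mul_assoc]
  have key : P * Matrix.fromBlocks 1 X 0 ((β • (1 : Matrix (Fin m) (Fin m) ℝ) + G)⁻¹ * G)
      = Matrix.fromBlocks A Bᵀ (-B) C := by
    rw [hSinv, hP, Matrix.fromBlocks_multiply]
    have e11 : A * (1 : Matrix (Fin n) (Fin n) ℝ) + Bᵀ * (0 : Matrix (Fin m) (Fin n) ℝ) = A := by simp
    have e21 : -B * (1 : Matrix (Fin n) (Fin n) ℝ) + (β • (1 : Matrix (Fin m) (Fin m) ℝ) + C) * (0 : Matrix (Fin m) (Fin n) ℝ) = -B := by simp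
    have e12 : A * X + Bᵀ * (S⁻¹ * G) = Bᵀ := by
      rw [hAX, ← Matrix.mul_assoc]; noncomm_ring
    have e22 : -B * X + (β • (1 : Matrix (Fin m) (Fin m) ℝ) + C) * (S⁻¹ * G) = C := by
      rw [hBX, hDC, hG]; noncomm_ring
    rw [e11, e21, e12, e22]
  calc P⁻¹ * Matrix.fromBlocks A Bᵀ (-B) C
      = P⁻¹ * (P * Matrix.fromBlocks 1 X 0 ((β • (1 : Matrix (Fin m) (Fin m) ℝ) + G)⁻¹ * G)) := by
        rw [key]
    _ = (P⁻¹ * P) * Matrix.fromBlocks 1 X 0 ((β • (1 : Matrix (Fin m) (Fin m) ℝ) + G)⁻¹ * G) := by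
        rw [Matrix.mul_assoc]
    _ = Matrix.fromBlocks 1 X 0 ((β • (1 : Matrix (Fin m) (Fin m) ℝ) + G)⁻¹ * G) := by
        rw [Matrix.nonsing_inv_mul P hPdet, Matrix.one_mul]
end

section
/- Let β > 0 and let Ψ = P_RMGSS⁻¹ 𝒜. The characteristic polynomial of Ψ equals (X − 1)^n times the characteristic polynomial of (βI + G)⁻¹G, where G = C + B A⁻¹ Bᵀ. In particular, 1 is an eigenvalue of Ψ of algebraic multiplicity at least n, and every other eigenvalue of Ψ is an eigenvalue of (βI + G)⁻¹G. -/
open Matrix Polynomial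

/-!
The preconditioner and `𝒜` share their first block column, so `P⁻¹ 𝒜` is block upper triangular
with identity `(1,1)`-block. By the block inverse formula its `(2,2)`-block is `S⁻¹ (C + B A⁻¹ Bᵀ)`,
where `S = βI + C + B A⁻¹ Bᵀ = βI + G` is the Schur complement of `A` in the preconditioner.
-/

namespace Matrix

variable {m n R : Type*} [Fintype m] [Fintype n] [DecidableEq m] [DecidableEq n]

theorem inv_fromBlocks_mul_fromBlocks [CommRing R] (A : Matrix m m R) (B : Matrix m n R)
    (C : Matrix n m R) (D D' : Matrix n n R) (hA : IsUnit A.det)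
    (hS : IsUnit (D - C * A⁻¹ * B).det) :
    (fromBlocks A B C D)⁻¹ * fromBlocks A B C D' =
      fromBlocks 1 (A⁻¹ * B * (1 - (D - C * A⁻¹ * B)⁻¹ * (D' - C * A⁻¹ * B))) 0
        ((D - C * A⁻¹ * B)⁻¹ * (D' - C * A⁻¹ * B)) := by
  let := A.invertibleOfIsUnitDet hA
  let : Invertible (D - C * ⅟A * B) := by
    rw [invOf_eq_nonsing_inv]; exact invertibleOfIsUnitDet _ hS
  let := fromBlocks₁₁Invertible A B C D
  rw [← invOf_eq_nonsing_inv (fromBlocks A B C D), invOf_fromBlocks₁₁_eq, fromBlocks_multiply]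
  simp only [← invOf_eq_nonsing_inv]
  congr 1
  · simp only [Matrix.add_mul, Matrix.mul_assoc, invOf_mul_self, Matrix.mul_one, Matrix.neg_mul]
    abel
  · simp only [Matrix.add_mul, Matrix.mul_sub, Matrix.mul_assoc, Matrix.mul_one, Matrix.neg_mul]
    abel
  · simp only [Matrix.neg_mul, Matrix.mul_assoc, invOf_mul_self, Matrix.mul_one]
    abel
  · simp only [Matrix.mul_sub, Matrix.neg_mul, Matrix.mul_assoc]
    abel

theorem charpoly_inv_fromBlocks_mul_fromBlocks [CommRing R] (A : Matrix m m R) (B : Matrix m n R)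
    (C : Matrix n m R) (D D' : Matrix n n R) (hA : IsUnit A.det)
    (hS : IsUnit (D - C * A⁻¹ * B).det) :
    ((fromBlocks A B C D)⁻¹ * fromBlocks A B C D').charpoly =
      (X - 1) ^ Fintype.card m * ((D - C * A⁻¹ * B)⁻¹ * (D' - C * A⁻¹ * B)).charpoly := by
  rw [inv_fromBlocks_mul_fromBlocks A B C D D' hA hS, charpoly_fromBlocks_zero₂₁, charpoly_one]

theorem isRoot_charpoly_iff_exists_mulVec_eq_smul {K : Type*} [Field K] (M : Matrix n n K)
    (μ : K) : M.charpoly.IsRoot μ ↔ ∃ v ≠ 0, M *ᵥ v = μ • v := by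
  rw [IsRoot.def, eval_charpoly, ← exists_mulVec_eq_zero_iff]
  simp only [sub_mulVec, scalar_apply, ← smul_one_eq_diagonal, smul_mulVec, one_mulVec,
    sub_eq_zero, eq_comm]

theorem exists_mulVec_eq_smul_of_charpoly_eq_mul {K : Type*} [Field K] {M : Matrix m m K}
    {N : Matrix n n K} {p : K[X]} (h : M.charpoly = p * N.charpoly) {μ : K} (hμ : ¬p.IsRoot μ)
    (hM : ∃ u ≠ 0, M *ᵥ u = μ • u) : ∃ v ≠ 0, N *ᵥ v = μ • v := by
  rw [← isRoot_charpoly_iff_exists_mulVec_eq_smul, h, root_mul] at hM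
  exact (isRoot_charpoly_iff_exists_mulVec_eq_smul N μ).1 (hM.resolve_left hμ)

end Matrix

theorem RMGSS_preconditioned_charpoly_general
    (n m : ℕ)
    (A : Matrix (Fin n) (Fin n) ℝ) (B : Matrix (Fin m) (Fin n) ℝ)
    (C : Matrix (Fin m) (Fin m) ℝ)
    (hA : A.PosDef) (hC : C.PosSemidef)
    (β : ℝ) (hβ : 0 < β)
    (G : Matrix (Fin m) (Fin m) ℝ) (hG : G = C + B * A⁻¹ * Bᵀ)
    (Ψ : Matrix (Fin n ⊕ Fin m) (Fin n ⊕ Fin m) ℝ)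
    (hΨ : Ψ = (Matrix.fromBlocks A Bᵀ (-B)
        (β • (1 : Matrix (Fin m) (Fin m) ℝ) + C))⁻¹ *
      Matrix.fromBlocks A Bᵀ (-B) C)
    (T : Matrix (Fin m) (Fin m) ℝ)
    (hT : T = (β • (1 : Matrix (Fin m) (Fin m) ℝ) + G)⁻¹ * G) :
    Ψ.charpoly = (Polynomial.X - 1) ^ n * T.charpoly ∧
    n ≤ Polynomial.rootMultiplicity 1 Ψ.charpoly ∧
    ∀ lam : ℂ, lam ≠ 1 →
      (∃ u : Fin n ⊕ Fin m → ℂ, u ≠ 0 ∧ (Ψ.map Complex.ofReal) *ᵥ u = lam • u) →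
      (∃ v : Fin m → ℂ, v ≠ 0 ∧ (T.map Complex.ofReal) *ᵥ v = lam • v) := by
  have hG_psd : G.PosSemidef := hG ▸ hC.add (by
    simpa [conjTranspose_eq_transpose_of_trivial] using
      hA.inv.posSemidef.mul_mul_conjTranspose_same B)
  have hS : (β • (1 : Matrix (Fin m) (Fin m) ℝ) + G).PosDef :=
    (PosDef.one.smul hβ).add_posSemidef hG_psd
  have hschurP : β • (1 : Matrix (Fin m) (Fin m) ℝ) + C - -B * A⁻¹ * Bᵀ = β • 1 + G := by
    rw [hG, Matrix.neg_mul, Matrix.neg_mul, sub_neg_eq_add, add_assoc]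
  have hschur𝒜 : C - -B * A⁻¹ * Bᵀ = G := by
    rw [hG, Matrix.neg_mul, Matrix.neg_mul, sub_neg_eq_add]
  have hcharpoly : Ψ.charpoly = (X - 1) ^ n * T.charpoly := by
    rw [hΨ, charpoly_inv_fromBlocks_mul_fromBlocks _ _ _ _ _ hA.det_pos.ne'.isUnit
      (by rw [hschurP]; exact hS.det_pos.ne'.isUnit), hschurP, hschur𝒜, hT, Fintype.card_fin]
  refine ⟨hcharpoly, ?_, fun lam hlam hΨlam => ?_⟩
  · rw [le_rootMultiplicity_iff Ψ.charpoly_monic.ne_zero, hcharpoly, C_1]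
    exact dvd_mul_right _ _
  · refine exists_mulVec_eq_smul_of_charpoly_eq_mul (p := (X - 1) ^ n) ?_ ?_ hΨlam
    · have h := congrArg (Polynomial.map Complex.ofRealHom) hcharpoly
      simp only [← charpoly_map, Polynomial.map_mul, Polynomial.map_pow, Polynomial.map_sub,
        Polynomial.map_X, Polynomial.map_one] at h
      exact h
    · simpa [IsRoot] using pow_ne_zero n (sub_ne_zero.2 hlam)

theorem RMGSS_preconditioned_charpoly
    (n m : ℕ) (hn : 0 < n) (hm : 0 < m) (hmn : m ≤ n)
    (A : Matrix (Fin n) (Fin n) ℝ) (B : Matrix (Fin m) (Fin n) ℝ)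
    (C : Matrix (Fin m) (Fin m) ℝ)
    (hA : A.PosDef) (hC : C.PosSemidef) (hB : B.rank = m)
    (β : ℝ) (hβ : 0 < β)
    (G : Matrix (Fin m) (Fin m) ℝ) (hG : G = C + B * A⁻¹ * Bᵀ)
    (Ψ : Matrix (Fin n ⊕ Fin m) (Fin n ⊕ Fin m) ℝ)
    (hΨ : Ψ = (Matrix.fromBlocks A Bᵀ (-B)
        (β • (1 : Matrix (Fin m) (Fin m) ℝ) + C))⁻¹ *
      Matrix.fromBlocks A Bᵀ (-B) C)
    (T : Matrix (Fin m) (Fin m) ℝ)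
    (hT : T = (β • (1 : Matrix (Fin m) (Fin m) ℝ) + G)⁻¹ * G) :
    Ψ.charpoly = (Polynomial.X - 1) ^ n * T.charpoly ∧
    n ≤ Polynomial.rootMultiplicity 1 Ψ.charpoly ∧
    ∀ lam : ℂ, lam ≠ 1 →
      (∃ u : Fin n ⊕ Fin m → ℂ, u ≠ 0 ∧ (Ψ.map Complex.ofReal) *ᵥ u = lam • u) →
      (∃ v : Fin m → ℂ, v ≠ 0 ∧ (T.map Complex.ofReal) *ᵥ v = lam • v) :=
  RMGSS_preconditioned_charpoly_general n m A B C hA hC β hβ G hG Ψ hΨ T hT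
end

section
/- Let β > 0 and let Ψ = P_RMGSS⁻¹ 𝒜. Every eigenvalue λ ∈ ℂ of Ψ (regarded as a complex matrix) is real and satisfies 0 < λ ≤ 1; moreover, each eigenvalue λ satisfies either λ = 1 or |λ − 1| = β/(β + μ) for some eigenvalue μ > 0 of G = C + B A⁻¹ Bᵀ. -/
/-!
Since `P_RMGSS` and `𝒜` differ only by `β I` in the lower right block, `Ψ u = λ u` is the pencil
`𝒜 u = λ P_RMGSS u`. For `λ ≠ 1` its first block row forces `A x = -Bᵀ y`; eliminating `x` from
the second row leaves `(1 - λ) G y = λ β y` with `y ≠ 0`. As `G` is symmetric positive definite,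
`μ = λ β / (1 - λ)` is a positive real eigenvalue of `G`, hence `λ = μ / (β + μ)`.
-/

open Matrix

namespace Matrix

theorem mulVec_injective_of_rank_eq_card {m n K : Type*} [Fintype m] [Fintype n] [Field K]
    {M : Matrix m n K} (hM : M.rank = Fintype.card n) : Function.Injective M.mulVec := by
  have hker := M.mulVecLin.finrank_range_add_finrank_ker
  rw [← Matrix.rank, hM, Module.finrank_fintype_fun_eq_card, add_eq_left,
    Submodule.finrank_eq_zero, LinearMap.ker_eq_bot] at hker
  exact hker

theorem PosSemidef.posDef_add_mul_inv_mul_transpose {m n : Type*} [Fintype m] [Fintype n]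
    [DecidableEq n] {A : Matrix n n ℝ} {B : Matrix m n ℝ} {C : Matrix m m ℝ} (hC : C.PosSemidef)
    (hA : A.PosDef) (hB : B.rank = Fintype.card m) : (C + B * A⁻¹ * Bᵀ).PosDef := by
  have hBt : Function.Injective Bᵀ.mulVec :=
    mulVec_injective_of_rank_eq_card (by rw [rank_transpose, hB])
  simpa [conjTranspose_eq_transpose_of_trivial] using
    PosDef.posSemidef_add hC (hA.inv.conjTranspose_mul_mul_same hBt)

theorem isUnit_det_fromBlocks_of_posDef {ι κ : Type*} [Fintype ι] [DecidableEq ι] [Fintype κ]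
    [DecidableEq κ] {A : Matrix ι ι ℝ} (B : Matrix ι κ ℝ) (C : Matrix κ ι ℝ) {D : Matrix κ κ ℝ}
    (hA : A.PosDef) (hS : (D - C * A⁻¹ * B).PosDef) : IsUnit (fromBlocks A B C D).det := by
  have : Invertible A := hA.isUnit.invertible
  rw [det_fromBlocks₁₁, invOf_eq_nonsing_inv]
  exact (hA.isUnit.map detMonoidHom).mul (hS.isUnit.map detMonoidHom)

theorem map_mulVec_eq_smul_map_mulVec_of_inv_mul {ι K L : Type*} [Fintype ι] [DecidableEq ι]
    [CommRing K] [CommRing L] (f : K →+* L) {P M : Matrix ι ι K} (hP : IsUnit P.det) {lam : L}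
    {u : ι → L} (h : (P⁻¹ * M).map f *ᵥ u = lam • u) :
    M.map f *ᵥ u = lam • (P.map f *ᵥ u) := by
  rw [← mul_nonsing_inv_cancel_left (A := P) M hP, Matrix.map_mul, ← mulVec_mulVec, h,
    mulVec_smul]

theorem schur_mulVec_eq_smul_of_fromBlocks_mulVec_eq_smul {ι κ K : Type*} [Fintype ι]
    [DecidableEq ι] [Fintype κ] [DecidableEq κ] [Field K] {A A' : Matrix ι ι K}
    (hA : A' * A = 1) (E : Matrix ι κ K) (F : Matrix κ ι K) (C : Matrix κ κ K) {β lam : K}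
    (hlam : lam ≠ 1) {u : ι ⊕ κ → K} (hu : u ≠ 0)
    (h : fromBlocks A E F C *ᵥ u = lam • (fromBlocks A E F (β • 1 + C) *ᵥ u)) :
    u ∘ Sum.inr ≠ 0 ∧
      (C - F * A' * E) *ᵥ (u ∘ Sum.inr) = (lam * β / (1 - lam)) • (u ∘ Sum.inr) := by
  set x := u ∘ Sum.inl
  set y := u ∘ Sum.inr
  have hlam' : 1 - lam ≠ 0 := sub_ne_zero.mpr hlam.symm
  have h₁ : A *ᵥ x + E *ᵥ y = lam • (A *ᵥ x + E *ᵥ y) := by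
    funext i
    simpa [fromBlocks_mulVec] using congrFun h (Sum.inl i)
  have h₂ : F *ᵥ x + C *ᵥ y = lam • (F *ᵥ x + (β • 1 + C) *ᵥ y) := by
    funext i
    simpa [fromBlocks_mulVec] using congrFun h (Sum.inr i)
  have hAx : A *ᵥ x = -(E *ᵥ y) := by
    refine eq_neg_of_add_eq_zero_left ((smul_eq_zero.mp ?_).resolve_left hlam')
    rw [sub_smul, one_smul, ← h₁, sub_self]
  have hx : x = -((A' * E) *ᵥ y) := by
    rw [← one_mulVec x, ← hA, ← mulVec_mulVec, hAx, mulVec_neg, mulVec_mulVec]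
  have hS : (C - F * A' * E) *ᵥ y = F *ᵥ x + C *ᵥ y := by
    rw [hx, sub_mulVec, mulVec_neg, Matrix.mul_assoc, ← mulVec_mulVec, sub_eq_neg_add]
  refine ⟨fun hy => hu ?_, ?_⟩
  · funext s
    rcases s with i | i
    · simpa [x, hy] using congrFun hx i
    · exact congrFun hy i
  · rw [add_mulVec, smul_mulVec, one_mulVec, add_comm (β • y), ← add_assoc, ← hS] at h₂
    have hscaled : (1 - lam) • ((C - F * A' * E) *ᵥ y) = (lam * β) • y := by
      rw [sub_smul, one_smul, sub_eq_iff_eq_add', ← smul_smul, ← smul_add]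
      exact h₂
    rw [← inv_smul_smul₀ hlam' ((C - F * A' * E) *ᵥ y), hscaled, smul_smul, inv_mul_eq_div]

open scoped ComplexOrder in
theorem IsHermitian.im_eq_zero_of_mulVec_eq_smul {ι 𝕜 : Type*} [Fintype ι] [RCLike 𝕜]
    {H : Matrix ι ι 𝕜} (hH : H.IsHermitian) {y : ι → 𝕜} (hy : y ≠ 0) {ν : 𝕜}
    (h : H *ᵥ y = ν • y) : RCLike.im ν = 0 := by
  obtain ⟨hs, hs_im⟩ := RCLike.pos_iff.mp (dotProduct_star_self_pos_iff.mpr hy)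
  have hform : RCLike.im (star y ⬝ᵥ H *ᵥ y) = 0 := hH.im_star_dotProduct_mulVec_self y
  rw [h, dotProduct_smul, smul_eq_mul, RCLike.mul_im, hs_im, mul_zero, zero_add] at hform
  exact (mul_eq_zero.mp hform).resolve_right hs.ne'

theorem exists_mulVec_eq_smul_of_map {ι K L : Type*} [Fintype ι] [DecidableEq ι]
    [Field K] [Field L] (f : K →+* L) {M : Matrix ι ι K} {μ : K} {y : ι → L} (hy : y ≠ 0)
    (h : M.map f *ᵥ y = f μ • y) : ∃ v ≠ 0, M *ᵥ v = μ • v := by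
  have hmap : (M - μ • 1).map f = M.map f - f μ • 1 := by
    ext i j
    simp [Matrix.one_apply, apply_ite f]
  have hdet : f (M - μ • 1).det = 0 := by
    rw [f.map_det, RingHom.mapMatrix_apply, hmap]
    refine exists_mulVec_eq_zero_iff.mp ⟨y, hy, ?_⟩
    rw [sub_mulVec, smul_mulVec, one_mulVec, h, sub_self]
  obtain ⟨v, hv, hMv⟩ := exists_mulVec_eq_zero_iff.mpr ((map_eq_zero f).mp hdet)
  exact ⟨v, hv, by rwa [sub_mulVec, smul_mulVec, one_mulVec, sub_eq_zero] at hMv⟩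

theorem PosDef.pos_of_mulVec_eq_smul {ι : Type*} [Fintype ι] {G : Matrix ι ι ℝ}
    (hG : G.PosDef) {v : ι → ℝ} (hv : v ≠ 0) {μ : ℝ} (h : G *ᵥ v = μ • v) : 0 < μ := by
  have hform := hG.dotProduct_mulVec_pos hv
  rw [h, dotProduct_smul, smul_eq_mul] at hform
  exact pos_of_mul_pos_left hform (dotProduct_star_self_pos_iff.mpr hv).le

theorem PosDef.exists_eigenvector_of_map_ofReal_mulVec_eq_smul {ι : Type*} [Fintype ι]
    [DecidableEq ι] {G : Matrix ι ι ℝ} (hG : G.PosDef) {y : ι → ℂ} (hy : y ≠ 0) {ν : ℂ}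
    (h : G.map Complex.ofReal *ᵥ y = ν • y) :
    ∃ μ : ℝ, ν = μ ∧ 0 < μ ∧ ∃ v ≠ 0, G *ᵥ v = μ • v := by
  have hν : ν = (ν.re : ℂ) := by
    refine Complex.ext rfl ?_
    rw [Complex.ofReal_im]
    exact (hG.isHermitian.map _ fun _ => (Complex.conj_ofReal _).symm).im_eq_zero_of_mulVec_eq_smul
      hy h
  rw [hν] at h
  obtain ⟨v, hv, hGv⟩ := exists_mulVec_eq_smul_of_map Complex.ofRealHom hy h
  exact ⟨ν.re, hν, hG.pos_of_mulVec_eq_smul hv hGv, v, hv, hGv⟩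

end Matrix

theorem saddle_schur_mulVec_eq_smul_of_map {ι κ K L : Type*} [Fintype ι] [DecidableEq ι]
    [Fintype κ] [DecidableEq κ] [Field K] [Field L] (f : K →+* L) {A : Matrix ι ι K}
    (hA : IsUnit A.det) (B : Matrix κ ι K) (C : Matrix κ κ K) {β : K} {lam : L} (hlam : lam ≠ 1)
    {u : ι ⊕ κ → L} (hu : u ≠ 0)
    (h : (fromBlocks A Bᵀ (-B) C).map f *ᵥ u =
      lam • ((fromBlocks A Bᵀ (-B) (β • 1 + C)).map f *ᵥ u)) :
    u ∘ Sum.inr ≠ 0 ∧ (C + B * A⁻¹ * Bᵀ).map f *ᵥ (u ∘ Sum.inr) =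
      (lam * f β / (1 - lam)) • (u ∘ Sum.inr) := by
  have hD : (β • 1 + C).map f = f β • 1 + C.map f := by
    ext i j
    simp [one_apply, apply_ite f]
  have hA' : (A⁻¹).map f * A.map f = 1 := by
    rw [← Matrix.map_mul, nonsing_inv_mul _ hA]
    simp
  have hS : C.map f - (-B).map f * (A⁻¹).map f * (B.map f)ᵀ = (C + B * A⁻¹ * Bᵀ).map f := by
    have hneg : (-B).map f = -B.map f := by ext; simp
    rw [hneg, Matrix.neg_mul, Matrix.neg_mul, sub_neg_eq_add, Matrix.map_add _ (map_add f),
      Matrix.map_mul, Matrix.map_mul, transpose_map]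
  simp only [fromBlocks_map, transpose_map, hD] at h
  rw [← hS]
  exact schur_mulVec_eq_smul_of_fromBlocks_mulVec_eq_smul hA' _ _ _ hlam hu h

theorem Complex.eq_ofReal_div_add_of_mul_div_one_sub_eq {lam : ℂ} {β μ : ℝ} (hlam : lam ≠ 1)
    (hβμ : β + μ ≠ 0) (h : lam * β / (1 - lam) = μ) : lam = ((μ / (β + μ) : ℝ) : ℂ) := by
  rw [div_eq_iff (sub_ne_zero.mpr hlam.symm)] at h
  rw [Complex.ofReal_div, eq_div_iff (by exact_mod_cast hβμ)]
  push_cast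
  linear_combination h

theorem RMGSS_preconditioned_eigenvalues_general
    (n m : ℕ)
    (A : Matrix (Fin n) (Fin n) ℝ) (B : Matrix (Fin m) (Fin n) ℝ)
    (C : Matrix (Fin m) (Fin m) ℝ)
    (hA : A.PosDef) (hC : C.PosSemidef) (hB : B.rank = m)
    (β : ℝ) (hβ : 0 < β)
    (G : Matrix (Fin m) (Fin m) ℝ) (hG : G = C + B * A⁻¹ * Bᵀ)
    (Ψ : Matrix (Fin n ⊕ Fin m) (Fin n ⊕ Fin m) ℝ)
    (hΨ : Ψ = (Matrix.fromBlocks A Bᵀ (-B)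
        (β • (1 : Matrix (Fin m) (Fin m) ℝ) + C))⁻¹ *
      Matrix.fromBlocks A Bᵀ (-B) C) :
    ∀ lam : ℂ, ∀ u : Fin n ⊕ Fin m → ℂ, u ≠ 0 →
      (Ψ.map Complex.ofReal) *ᵥ u = lam • u →
      lam.im = 0 ∧ 0 < lam.re ∧ lam.re ≤ 1 ∧
      (lam = 1 ∨ ∃ μ : ℝ, 0 < μ ∧ (∃ v : Fin m → ℝ, v ≠ 0 ∧ G *ᵥ v = μ • v) ∧
        ‖lam - 1‖ = β / (β + μ)) := by
  intro lam u hu hΨu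
  have hGpd : G.PosDef := hG ▸ hC.posDef_add_mul_inv_mul_transpose hA (by simpa using hB)
  have hP : IsUnit (fromBlocks A Bᵀ (-B) (β • 1 + C)).det := by
    refine isUnit_det_fromBlocks_of_posDef _ _ hA ?_
    rw [Matrix.neg_mul, Matrix.neg_mul, sub_neg_eq_add, add_assoc, ← hG]
    exact (PosDef.one.smul hβ).add hGpd
  rcases eq_or_ne lam 1 with rfl | hlam
  · norm_num
  subst hΨ
  obtain ⟨hy, hGy⟩ := saddle_schur_mulVec_eq_smul_of_map Complex.ofRealHom hA.det_pos.ne'.isUnit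
    _ _ hlam hu (map_mulVec_eq_smul_map_mulVec_of_inv_mul Complex.ofRealHom hP hΨu)
  rw [← hG] at hGy
  obtain ⟨μ, hμ, hμpos, hv⟩ := hGpd.exists_eigenvector_of_map_ofReal_mulVec_eq_smul hy hGy
  have hβμ : 0 < β + μ := add_pos hβ hμpos
  obtain rfl := Complex.eq_ofReal_div_add_of_mul_div_one_sub_eq hlam hβμ.ne' hμ
  refine ⟨Complex.ofReal_im _, ?_, ?_, Or.inr ⟨μ, hμpos, hv, ?_⟩⟩
  · exact (Complex.ofReal_re _).symm ▸ div_pos hμpos hβμ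
  · exact (Complex.ofReal_re _).symm ▸ div_le_one_of_le₀ (by linarith) hβμ.le
  · rw [← Complex.ofReal_one, ← Complex.ofReal_sub, Complex.norm_real, Real.norm_eq_abs,
      div_sub_one hβμ.ne', sub_add_cancel_right, abs_div, abs_neg, abs_of_pos hβ, abs_of_pos hβμ]

theorem RMGSS_preconditioned_eigenvalues
    (n m : ℕ) (hn : 0 < n) (hm : 0 < m) (hmn : m ≤ n)
    (A : Matrix (Fin n) (Fin n) ℝ) (B : Matrix (Fin m) (Fin n) ℝ)
    (C : Matrix (Fin m) (Fin m) ℝ)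
    (hA : A.PosDef) (hC : C.PosSemidef) (hB : B.rank = m)
    (β : ℝ) (hβ : 0 < β)
    (G : Matrix (Fin m) (Fin m) ℝ) (hG : G = C + B * A⁻¹ * Bᵀ)
    (Ψ : Matrix (Fin n ⊕ Fin m) (Fin n ⊕ Fin m) ℝ)
    (hΨ : Ψ = (Matrix.fromBlocks A Bᵀ (-B)
        (β • (1 : Matrix (Fin m) (Fin m) ℝ) + C))⁻¹ *
      Matrix.fromBlocks A Bᵀ (-B) C) :
    ∀ lam : ℂ, ∀ u : Fin n ⊕ Fin m → ℂ, u ≠ 0 →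
      (Ψ.map Complex.ofReal) *ᵥ u = lam • u →
      lam.im = 0 ∧ 0 < lam.re ∧ lam.re ≤ 1 ∧
      (lam = 1 ∨ ∃ μ : ℝ, 0 < μ ∧ (∃ v : Fin m → ℝ, v ≠ 0 ∧ G *ᵥ v = μ • v) ∧
        ‖lam - 1‖ = β / (β + μ)) :=
  RMGSS_preconditioned_eigenvalues_general n m A B C hA hC hB β hβ G hG Ψ hΨ
end

section
/- Let β > 0 and let Ψ = P_RMGSS⁻¹ 𝒜. The minimal polynomial of Ψ over ℝ has degree at most m + 1. -/
/-!
`P_RMGSS` differs from `𝒜` only by `β I` in the `(2,2)` block, a matrix `U V` of inner dimension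
`m`, so `Ψ = P⁻¹ (P - U V) = 1 - (P⁻¹ U) V`. For any `X : ι × κ` and `Y : κ × ι` the matrix `X Y`
is annihilated by `t · χ_{Y X}(t)`, since `X Y · q(X Y) = X q(Y X) Y` for every polynomial `q`;
shifting by `1` gives a monic annihilator of `1 + X Y` of degree `card κ + 1`. Invertibility of
`P` comes from its Schur complement `β I + C + B A⁻¹ Bᵀ`, which is positive definite.
-/

open Matrix Polynomial

namespace Matrix

section Rectangular

variable {R : Type*} [CommRing R] {ι κ : Type*} [Fintype ι] [Fintype κ]
  [DecidableEq ι] [DecidableEq κ]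

theorem mul_pow_succ_eq_mul_pow_mul (X : Matrix ι κ R) (Y : Matrix κ ι R) (j : ℕ) :
    (X * Y) ^ (j + 1) = X * (Y * X) ^ j * Y := by
  induction j with
  | zero => simp
  | succ j ih => rw [pow_succ, ih, pow_succ]; simp only [Matrix.mul_assoc]

theorem aeval_mul_mul_self (X : Matrix ι κ R) (Y : Matrix κ ι R) (p : R[X]) :
    aeval (X * Y) p * (X * Y) = X * aeval (Y * X) p * Y := by
  rw [aeval_eq_sum_range (X * Y), aeval_eq_sum_range (Y * X), Matrix.sum_mul, Matrix.mul_sum,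
    Matrix.sum_mul]
  refine Finset.sum_congr rfl fun i _ => ?_
  rw [Matrix.smul_mul, Matrix.mul_smul, Matrix.smul_mul, ← pow_succ,
    mul_pow_succ_eq_mul_pow_mul]

theorem aeval_mul_charpoly_mul_X (X : Matrix ι κ R) (Y : Matrix κ ι R) :
    aeval (X * Y) ((Y * X).charpoly * Polynomial.X) = 0 := by
  rw [map_mul, aeval_X, aeval_mul_mul_self, aeval_self_charpoly, Matrix.mul_zero,
    Matrix.zero_mul]

theorem natDegree_minpoly_one_add_mul_le {K : Type*} [Field K] (X : Matrix ι κ K)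
    (Y : Matrix κ ι K) :
    (minpoly K (1 + X * Y)).natDegree ≤ Fintype.card κ + 1 := by
  set q := ((Y * X).charpoly * Polynomial.X).comp (Polynomial.X - Polynomial.C 1)
  have hq_monic : q.Monic :=
    ((charpoly_monic _).mul monic_X).comp (monic_X_sub_C 1) (by rw [natDegree_X_sub_C]; exact one_ne_zero)
  have hq_natDegree : q.natDegree = Fintype.card κ + 1 := by
    rw [natDegree_comp, natDegree_X_sub_C, mul_one, (charpoly_monic _).natDegree_mul monic_X,
      charpoly_natDegree_eq_dim, natDegree_X]
  have hq_root : aeval (1 + X * Y) q = 0 := by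
    simpa [q, aeval_comp] using aeval_mul_charpoly_mul_X X Y
  exact hq_natDegree ▸ natDegree_le_natDegree (minpoly.min K _ hq_monic hq_root)

theorem natDegree_minpoly_inv_mul_le_of_add_mul {K : Type*} [Field K] (M : Matrix ι ι K)
    (U : Matrix ι κ K) (V : Matrix κ ι K) (h : IsUnit (M + U * V).det) :
    (minpoly K ((M + U * V)⁻¹ * M)).natDegree ≤ Fintype.card κ + 1 := by
  have hΨ : (M + U * V)⁻¹ * M = 1 + -((M + U * V)⁻¹ * U) * V := by
    rw [← nonsing_inv_mul _ h, Matrix.neg_mul, Matrix.mul_assoc, ← sub_eq_add_neg,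
      ← Matrix.mul_sub, add_sub_cancel_right]
  exact hΨ ▸ natDegree_minpoly_one_add_mul_le _ V

end Rectangular

theorem fromBlocks_add₂₂ {R : Type*} [Semiring R] {l n : Type*} [Fintype n] [DecidableEq n]
    (A : Matrix l l R) (B : Matrix l n R) (C : Matrix n l R) (D E : Matrix n n R) :
    fromBlocks A B C (E + D) =
      fromBlocks A B C D + fromRows (0 : Matrix l n R) E * fromCols (0 : Matrix n l R) 1 := by
  rw [fromRows_mul_fromCols, fromBlocks_add]
  simp [add_comm]

theorem isUnit_det_fromBlocks_conjTranspose_neg {K : Type*} [Field K] [PartialOrder K]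
    [StarRing K] [StarOrderedRing K] {l n : Type*} [Fintype l] [Fintype n] [DecidableEq l]
    [DecidableEq n] {A : Matrix l l K} (B : Matrix n l K) {D : Matrix n n K} (hA : A.PosDef)
    (hD : D.PosDef) : IsUnit (fromBlocks A Bᴴ (-B) D).det := by
  have := hA.isUnit.invertible
  have hSchur : (D - -B * ⅟A * Bᴴ).PosDef := by
    rw [invOf_eq_nonsing_inv, Matrix.neg_mul, Matrix.neg_mul, sub_neg_eq_add]
    exact hD.add_posSemidef (hA.inv.posSemidef.mul_mul_conjTranspose_same B)
  rw [det_fromBlocks₁₁]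
  exact (isUnit_iff_isUnit_det A |>.mp hA.isUnit).mul
    (isUnit_iff_isUnit_det _ |>.mp hSchur.isUnit)

end Matrix

theorem RMGSS_preconditioned_minpoly_degree_general
    (n m : ℕ)
    (A : Matrix (Fin n) (Fin n) ℝ) (B : Matrix (Fin m) (Fin n) ℝ)
    (C : Matrix (Fin m) (Fin m) ℝ)
    (hA : A.PosDef) (hC : C.PosSemidef)
    (β : ℝ) (hβ : 0 < β)
    (Ψ : Matrix (Fin n ⊕ Fin m) (Fin n ⊕ Fin m) ℝ)
    (hΨ : Ψ = (Matrix.fromBlocks A Bᵀ (-B)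
        (β • (1 : Matrix (Fin m) (Fin m) ℝ) + C))⁻¹ *
      Matrix.fromBlocks A Bᵀ (-B) C) :
    (minpoly ℝ Ψ).natDegree ≤ m + 1 := by
  have hD : (β • (1 : Matrix (Fin m) (Fin m) ℝ) + C).PosDef :=
    (PosDef.one.smul hβ).add_posSemidef hC
  have hP := isUnit_det_fromBlocks_conjTranspose_neg B hA hD
  rw [conjTranspose_eq_transpose_of_trivial, fromBlocks_add₂₂] at hP
  rw [hΨ, fromBlocks_add₂₂]
  simpa using natDegree_minpoly_inv_mul_le_of_add_mul _ _ _ hP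

theorem RMGSS_preconditioned_minpoly_degree
    (n m : ℕ) (hn : 0 < n) (hm : 0 < m) (hmn : m ≤ n)
    (A : Matrix (Fin n) (Fin n) ℝ) (B : Matrix (Fin m) (Fin n) ℝ)
    (C : Matrix (Fin m) (Fin m) ℝ)
    (hA : A.PosDef) (hC : C.PosSemidef) (hB : B.rank = m)
    (β : ℝ) (hβ : 0 < β)
    (Ψ : Matrix (Fin n ⊕ Fin m) (Fin n ⊕ Fin m) ℝ)
    (hΨ : Ψ = (Matrix.fromBlocks A Bᵀ (-B)
        (β • (1 : Matrix (Fin m) (Fin m) ℝ) + C))⁻¹ *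
      Matrix.fromBlocks A Bᵀ (-B) C) :
    (minpoly ℝ Ψ).natDegree ≤ m + 1 :=
  RMGSS_preconditioned_minpoly_degree_general n m A B C hA hC β hβ Ψ hΨ
end
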